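/- Under the conditions of the previous truncation lemma, the truncated distribution retains hypercontractivity: for all unit u, E[⟨u,X⟩^4 | ‖X‖ ≤ C√d] ≤ (τ / (1 − C^{−2})) (1 − √τ/C)^{−2} (E[⟨u,X⟩^2 | ‖X‖ ≤ C√d])^2. -/

import Mathlib

/-!
Write `Y = ⟨u, X⟩`, `A = {‖X‖ ≤ C√d}` and `s = √τ / C`. Chebyshev's inequality and `tr Σ ≤ d` give
`P(Aᶜ) ≤ C⁻²`, so by Cauchy–Schwarz and hypercontractivity `E[Y²; Aᶜ] ≤ √(P(Aᶜ) E[Y⁴]) ≤ s E[Y²]`.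
Hence `E[Y²; A] ≥ (1 - s) E[Y²]`, while `E[Y⁴; A] ≤ E[Y⁴] ≤ τ E[Y²]²`; the normalisation by
`P(A) ≤ 1` only helps. Unless `Y = 0` a.s., hypercontractivity forces `τ ≥ 1`, so `C > 1`.
-/

open MeasureTheory
open scoped InnerProductSpace

section

variable {Ω : Type*} [MeasurableSpace Ω] {μ : Measure Ω}

theorem sq_setIntegral_le_measureReal_mul_setIntegral_sq {f : Ω → ℝ} {s : Set Ω}
    (hs : μ s ≠ ⊤) (hf : IntegrableOn f s μ) (hf2 : IntegrableOn (fun ω => f ω ^ 2) s μ) :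
    (∫ ω in s, f ω ∂μ) ^ 2 ≤ μ.real s * ∫ ω in s, f ω ^ 2 ∂μ := by
  rcases eq_or_ne (μ s) 0 with hs0 | hs0
  · simp [Measure.restrict_eq_zero.mpr hs0]
  have hp : 0 < μ.real s := ENNReal.toReal_pos hs0 hs
  have jensen := even_two.convexOn_pow.map_set_average_le (continuous_pow 2).continuousOn
    isClosed_univ hs0 hs (by simp) hf hf2
  simp only [setAverage_eq, smul_eq_mul] at jensen
  rw [mul_pow, inv_pow] at jensen
  calc (∫ ω in s, f ω ∂μ) ^ 2 = μ.real s ^ 2 * ((μ.real s ^ 2)⁻¹ * (∫ ω in s, f ω ∂μ) ^ 2) := by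
        field_simp
    _ ≤ μ.real s ^ 2 * ((μ.real s)⁻¹ * ∫ ω in s, f ω ^ 2 ∂μ) := by gcongr
    _ = μ.real s * ∫ ω in s, f ω ^ 2 ∂μ := by field_simp

theorem integrable_sq_of_integrable_pow_four [IsFiniteMeasure μ] {Y : Ω → ℝ}
    (hY : AEStronglyMeasurable Y μ) (hY4 : Integrable (fun ω => Y ω ^ 4) μ) :
    Integrable (fun ω => Y ω ^ 2) μ :=
  ((integrable_const 1).add hY4).mono' (hY.pow 2) <| ae_of_all μ fun ω => by
    rw [Real.norm_of_nonneg (sq_nonneg _), Pi.add_apply]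
    nlinarith [sq_nonneg (Y ω ^ 2 - 1)]

theorem measureReal_lt_norm_le {E : Type*} [NormedAddCommGroup E] [IsFiniteMeasure μ]
    {X : Ω → E} (hX : Integrable (fun ω => ‖X ω‖ ^ 2) μ) {r : ℝ} (hr : 0 < r) :
    μ.real {ω | r < ‖X ω‖} ≤ (∫ ω, ‖X ω‖ ^ 2 ∂μ) / r ^ 2 := by
  rw [le_div_iff₀ (by positivity), mul_comm]
  calc r ^ 2 * μ.real {ω | r < ‖X ω‖} ≤ r ^ 2 * μ.real {ω | r ^ 2 ≤ ‖X ω‖ ^ 2} := by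
        gcongr r ^ 2 * ?_
        exact measureReal_mono fun ω (hω : r < ‖X ω‖) => pow_le_pow_left₀ hr.le hω.le 2
    _ ≤ ∫ ω, ‖X ω‖ ^ 2 ∂μ :=
        mul_meas_ge_le_integral_of_nonneg (ae_of_all μ fun ω => sq_nonneg _) hX _

theorem measureReal_mul_sqrt_lt_norm_le {E : Type*} [NormedAddCommGroup E] [IsFiniteMeasure μ]
    {X : Ω → E} (hX : Integrable (fun ω => ‖X ω‖ ^ 2) μ) {σ C : ℝ} (hσ : 0 < σ) (hC : 0 < C)
    (hmom : ∫ ω, ‖X ω‖ ^ 2 ∂μ ≤ σ) :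
    μ.real {ω | C * Real.sqrt σ < ‖X ω‖} ≤ C⁻¹ ^ 2 :=
  calc μ.real {ω | C * Real.sqrt σ < ‖X ω‖} ≤ (∫ ω, ‖X ω‖ ^ 2 ∂μ) / (C * Real.sqrt σ) ^ 2 :=
        measureReal_lt_norm_le hX (by positivity)
    _ ≤ σ / (C * Real.sqrt σ) ^ 2 := by gcongr
    _ = C⁻¹ ^ 2 := by
        rw [mul_pow, Real.sq_sqrt hσ.le]
        field_simp

theorem EuclideanSpace.integral_norm_sq_eq_sum {ι : Type*} [Fintype ι] {X : Ω → EuclideanSpace ℝ ι}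
    (hX : ∀ i, Integrable (fun ω => X ω i * X ω i) μ) :
    ∫ ω, ‖X ω‖ ^ 2 ∂μ = ∑ i, ∫ ω, X ω i * X ω i ∂μ := by
  simp_rw [EuclideanSpace.real_norm_sq_eq, sq]
  exact integral_finsetSum _ fun i _ => hX i

theorem EuclideanSpace.integrable_norm_sq {ι : Type*} [Fintype ι] {X : Ω → EuclideanSpace ℝ ι}
    (hX : ∀ i, Integrable (fun ω => X ω i * X ω i) μ) :
    Integrable (fun ω => ‖X ω‖ ^ 2) μ := by
  simp_rw [EuclideanSpace.real_norm_sq_eq, sq]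
  exact integrable_finsetSum _ fun i _ => hX i

section Probability

variable [IsProbabilityMeasure μ] {Y : Ω → ℝ} {τ : ℝ}

theorem one_le_of_integral_pow_four_le (hY : AEStronglyMeasurable Y μ)
    (hY4 : Integrable (fun ω => Y ω ^ 4) μ) (hm : 0 < ∫ ω, Y ω ^ 2 ∂μ)
    (hhc : ∫ ω, Y ω ^ 4 ∂μ ≤ τ * (∫ ω, Y ω ^ 2 ∂μ) ^ 2) : 1 ≤ τ := by
  have hY2 := integrable_sq_of_integrable_pow_four hY hY4
  have h := sq_setIntegral_le_measureReal_mul_setIntegral_sq (s := Set.univ) (measure_ne_top μ _)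
    hY2.integrableOn (by simpa only [← pow_mul] using hY4.integrableOn)
  simp only [setIntegral_univ, probReal_univ, one_mul, ← pow_mul] at h
  exact le_of_mul_le_mul_right (by linarith) (pow_pos hm 2)

theorem setIntegral_sq_le_of_measureReal_le (hY : AEStronglyMeasurable Y μ)
    (hY4 : Integrable (fun ω => Y ω ^ 4) μ)
    (hhc : ∫ ω, Y ω ^ 4 ∂μ ≤ τ * (∫ ω, Y ω ^ 2 ∂μ) ^ 2) (hτ : 0 ≤ τ)
    {C : ℝ} (hC : 0 < C) {s : Set Ω} (hs : μ.real s ≤ C⁻¹ ^ 2) :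
    ∫ ω in s, Y ω ^ 2 ∂μ ≤ Real.sqrt τ / C * ∫ ω, Y ω ^ 2 ∂μ := by
  have hY2 := integrable_sq_of_integrable_pow_four hY hY4
  have hcs := sq_setIntegral_le_measureReal_mul_setIntegral_sq (measure_ne_top μ s)
    hY2.integrableOn (by simpa only [← pow_mul] using hY4.integrableOn)
  simp only [← pow_mul] at hcs
  have htail4 : ∫ ω in s, Y ω ^ 4 ∂μ ≤ ∫ ω, Y ω ^ 4 ∂μ :=
    setIntegral_le_integral hY4 (ae_of_all μ fun ω => by positivity)
  refine (pow_le_pow_iff_left₀ (setIntegral_nonneg_of_ae (ae_of_all _ fun ω => sq_nonneg _))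
    (by positivity) two_ne_zero).mp ?_
  calc (∫ ω in s, Y ω ^ 2 ∂μ) ^ 2 ≤ μ.real s * ∫ ω in s, Y ω ^ 4 ∂μ := hcs
    _ ≤ C⁻¹ ^ 2 * (τ * (∫ ω, Y ω ^ 2 ∂μ) ^ 2) := by
        gcongr
        exact htail4.trans hhc
    _ = (Real.sqrt τ / C * ∫ ω, Y ω ^ 2 ∂μ) ^ 2 := by
        rw [div_mul_eq_mul_div, div_pow, mul_pow, Real.sq_sqrt hτ]
        ring

theorem setAverage_pow_four_le (hY : AEStronglyMeasurable Y μ)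
    (hY4 : Integrable (fun ω => Y ω ^ 4) μ)
    (hhc : ∫ ω, Y ω ^ 4 ∂μ ≤ τ * (∫ ω, Y ω ^ 2 ∂μ) ^ 2)
    {C : ℝ} (hC : Real.sqrt τ < C) {A : Set Ω} (hA : MeasurableSet A)
    (htail : μ.real Aᶜ ≤ C⁻¹ ^ 2) :
    ⨍ ω in A, Y ω ^ 4 ∂μ ≤
      τ / (1 - C⁻¹ ^ 2) * ((1 - Real.sqrt τ / C)⁻¹) ^ 2 * (⨍ ω in A, Y ω ^ 2 ∂μ) ^ 2 := by
  have hY2 := integrable_sq_of_integrable_pow_four hY hY4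
  simp only [setAverage_eq, smul_eq_mul]
  set m := ∫ ω, Y ω ^ 2 ∂μ
  set a := ∫ ω in A, Y ω ^ 2 ∂μ
  set p := μ.real A
  have hf : ∫ ω in A, Y ω ^ 4 ∂μ ≤ τ * m ^ 2 :=
    (setIntegral_le_integral hY4 (ae_of_all μ fun ω => by positivity)).trans hhc
  have hf0 : 0 ≤ ∫ ω in A, Y ω ^ 4 ∂μ := setIntegral_nonneg hA fun ω _ => by positivity
  have ha0 : 0 ≤ a := setIntegral_nonneg hA fun ω _ => sq_nonneg _
  have hm0 : 0 ≤ m := integral_nonneg fun ω => sq_nonneg (Y ω)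
  rcases hm0.eq_or_lt with hm | hm
  · have hf4 : ∫ ω in A, Y ω ^ 4 ∂μ = 0 := le_antisymm (by rw [← hm] at hf; simpa using hf) hf0
    have ha : a = 0 :=
      le_antisymm (hm ▸ setIntegral_le_integral hY2 (ae_of_all μ fun ω => sq_nonneg _)) ha0
    simp [hf4, ha]
  have hτ : 1 ≤ τ := one_le_of_integral_pow_four_le hY hY4 hm hhc
  have hC1 : 1 < C := (Real.one_le_sqrt.mpr hτ).trans_lt hC
  have hs : Real.sqrt τ / C < 1 := (div_lt_one (by linarith)).mpr hC
  have hb := setIntegral_sq_le_of_measureReal_le hY hY4 hhc (by linarith) (by linarith) htail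
  have ha : (1 - Real.sqrt τ / C) * m ≤ a := by linarith [integral_add_compl hA hY2]
  have he : 0 < 1 - C⁻¹ ^ 2 :=
    sub_pos.2 (pow_lt_one₀ (by positivity) (inv_lt_one_of_one_lt₀ hC1) two_ne_zero)
  have hpinv : p⁻¹ ≤ p⁻¹ * p⁻¹ := by
    have hp0 : 0 ≤ p := measureReal_nonneg
    rcases hp0.eq_or_lt with hp0 | hp0
    · rw [← hp0]; simp
    · exact le_mul_of_one_le_right (inv_nonneg.2 hp0.le) ((one_le_inv₀ hp0).2 measureReal_le_one)
  calc p⁻¹ * ∫ ω in A, Y ω ^ 4 ∂μ ≤ p⁻¹ * (τ * m ^ 2) := by gcongr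
    _ ≤ p⁻¹ * (τ * ((1 - Real.sqrt τ / C)⁻¹ * a) ^ 2) := by
        gcongr
        rwa [le_inv_mul_iff₀ (by linarith)]
    _ ≤ p⁻¹ * p⁻¹ / (1 - C⁻¹ ^ 2) * (τ * ((1 - Real.sqrt τ / C)⁻¹ * a) ^ 2) := by
        gcongr
        exact hpinv.trans (le_div_self (by positivity) he (by linarith [sq_nonneg C⁻¹]))
    _ = _ := by ring

end Probability

end

theorem truncated_hypercontractivity_general
    {Ω : Type*} [MeasureSpace Ω] (μ : Measure Ω) [IsProbabilityMeasure μ]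
    {d : ℕ} (X : Ω → EuclideanSpace ℝ (Fin d)) (hX : Measurable X)
    (τ C : ℝ) (hC : Real.sqrt τ < C)
    (Smat : Matrix (Fin d) (Fin d) ℝ)
    (hSmat : ∀ i j, Smat i j = ∫ ω, X ω i * X ω j ∂μ)
    (htr : Smat.trace ≤ (d : ℝ))
    (hint2 : ∀ i j, Integrable (fun ω => X ω i * X ω j) μ)
    (hint4 : ∀ u : EuclideanSpace ℝ (Fin d), Integrable (fun ω => ⟪u, X ω⟫_ℝ ^ 4) μ)
    (hhc : ∀ u : EuclideanSpace ℝ (Fin d),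
      ∫ ω, ⟪u, X ω⟫_ℝ ^ 4 ∂μ ≤ τ * (∫ ω, ⟪u, X ω⟫_ℝ ^ 2 ∂μ) ^ 2) :
    ∀ u : EuclideanSpace ℝ (Fin d), ‖u‖ = 1 →
      ((μ {ω | ‖X ω‖ ≤ C * Real.sqrt d}).toReal)⁻¹ *
          ∫ ω in {ω | ‖X ω‖ ≤ C * Real.sqrt d}, ⟪u, X ω⟫_ℝ ^ 4 ∂μ ≤
        (τ / (1 - C⁻¹ ^ 2)) * ((1 - Real.sqrt τ / C)⁻¹) ^ 2 *
          (((μ {ω | ‖X ω‖ ≤ C * Real.sqrt d}).toReal)⁻¹ *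
            ∫ ω in {ω | ‖X ω‖ ≤ C * Real.sqrt d}, ⟪u, X ω⟫_ℝ ^ 2 ∂μ) ^ 2 := by
  intro u _
  have hC0 : 0 < C := (Real.sqrt_nonneg τ).trans_lt hC
  have hmom : ∫ ω, ‖X ω‖ ^ 2 ∂μ ≤ d := by
    rw [EuclideanSpace.integral_norm_sq_eq_sum fun i => hint2 i i]
    simpa only [Matrix.trace, Matrix.diag, hSmat] using htr
  have htail : μ.real {ω | ‖X ω‖ ≤ C * Real.sqrt d}ᶜ ≤ C⁻¹ ^ 2 := by
    rcases Nat.eq_zero_or_pos d with rfl | hd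
    · simpa [Subsingleton.elim (X _) 0] using sq_nonneg C
    simpa only [Set.compl_ofPred, not_le] using
      measureReal_mul_sqrt_lt_norm_le (EuclideanSpace.integrable_norm_sq fun i => hint2 i i)
        (Nat.cast_pos.mpr hd) hC0 hmom
  simpa only [setAverage_eq, measureReal_def, smul_eq_mul] using
    setAverage_pow_four_le hX.const_inner.aestronglyMeasurable (hint4 u) (hhc u) hC
      (measurableSet_le hX.norm measurable_const) htail

/-- The truncated distribution retains L4-L2 hypercontractivity: for all unit `u`,
`E[⟨u,X⟩⁴ | ‖X‖ ≤ C√d] ≤ (τ/(1−C⁻²))(1−√τ/C)⁻² (E[⟨u,X⟩² | ‖X‖ ≤ C√d])²`. -/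
theorem truncated_hypercontractivity
    {Ω : Type*} [MeasureSpace Ω] (μ : Measure Ω) [IsProbabilityMeasure μ]
    {d : ℕ} (X : Ω → EuclideanSpace ℝ (Fin d)) (hX : Measurable X)
    (τ C : ℝ) (hτ : 0 < τ) (hC : Real.sqrt τ < C)
    (Smat : Matrix (Fin d) (Fin d) ℝ)
    (hSmat : ∀ i j, Smat i j = ∫ ω, X ω i * X ω j ∂μ)
    (htr : Smat.trace ≤ (d : ℝ))
    (hint2 : ∀ i j, Integrable (fun ω => X ω i * X ω j) μ)
    (hint4 : ∀ u : EuclideanSpace ℝ (Fin d), Integrable (fun ω => ⟪u, X ω⟫_ℝ ^ 4) μ)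
    (hhc : ∀ u : EuclideanSpace ℝ (Fin d),
      ∫ ω, ⟪u, X ω⟫_ℝ ^ 4 ∂μ ≤ τ * (∫ ω, ⟪u, X ω⟫_ℝ ^ 2 ∂μ) ^ 2) :
    ∀ u : EuclideanSpace ℝ (Fin d), ‖u‖ = 1 →
      ((μ {ω | ‖X ω‖ ≤ C * Real.sqrt d}).toReal)⁻¹ *
          ∫ ω in {ω | ‖X ω‖ ≤ C * Real.sqrt d}, ⟪u, X ω⟫_ℝ ^ 4 ∂μ ≤
        (τ / (1 - C⁻¹ ^ 2)) * ((1 - Real.sqrt τ / C)⁻¹) ^ 2 *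
          (((μ {ω | ‖X ω‖ ≤ C * Real.sqrt d}).toReal)⁻¹ *
            ∫ ω in {ω | ‖X ω‖ ≤ C * Real.sqrt d}, ⟪u, X ω⟫_ℝ ^ 2 ∂μ) ^ 2 :=
  truncated_hypercontractivity_general μ X hX τ C hC Smat hSmat htr hint2 hint4 hhc
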